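/- Let G be a group acting on the right by homeomorphisms on a Hausdorff topological space X. Suppose that for every nonempty open V ⊆ X the rigid stabilizer R_G(V) has no fixed point in V, i.e. for every x ∈ V there is g ∈ R_G(V) with x·g ≠ x. Then for every nonempty open V ⊆ X and every x ∈ V, the orbit {x·g : g ∈ R_G(V)} is infinite. -/

import Mathlib

open MulOpposite

/-- Pointwise stabilizer of a set `A ⊆ X` for a right action of `G` on `X`:
`{g ∈ G : x·g = x for all x ∈ A}`. -/
def pointwiseStabilizer (G : Type*) {X : Type*} [Group G] [MulAction Gᵐᵒᵖ X] (A : Set X) :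
    Subgroup G where
  carrier := {g : G | ∀ x ∈ A, op g • x = x}
  one_mem' := by intro x _; simp
  mul_mem' := by
    intro g h hg hh x hx
    have h1 : op (g * h) • x = op h • (op g • x) := by
      rw [op_mul, mul_smul]
    rw [h1, hg x hx, hh x hx]
  inv_mem' := by
    intro g hg x hx
    have h1 : op g⁻¹ • (op g • x) = x := by
      rw [op_inv]; exact inv_smul_smul _ _
    rw [hg x hx] at h1
    exact h1

/-- Rigid stabilizer `R_G(U) = {g ∈ G : x·g = x for all x ∈ X \ U}`. -/
def rigidStabilizer (G : Type*) {X : Type*} [Group G] [MulAction Gᵐᵒᵖ X] (U : Set X) :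
    Subgroup G :=
  pointwiseStabilizer G Uᶜ

section RigidStabilizer

variable {G X : Type*} [Group G] [MulAction Gᵐᵒᵖ X]

theorem rigidStabilizer_mono {U V : Set X} (hUV : U ⊆ V) :
    rigidStabilizer G U ≤ rigidStabilizer G V :=
  fun _ hg x hx => hg x fun hxU => hx (hUV hxU)

/-- Since `g⁻¹` also fixes `Uᶜ` pointwise, `g` cannot send a point of `U` into `Uᶜ`. -/
theorem smul_mem_of_mem_rigidStabilizer {U : Set X} {g : G} (hg : g ∈ rigidStabilizer G U)
    {x : X} (hx : x ∈ U) : op g • x ∈ U := by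
  by_contra hgx
  have hback : op g⁻¹ • (op g • x) = op g • x := (rigidStabilizer G U).inv_mem hg _ hgx
  rw [op_inv, inv_smul_smul] at hback
  exact hgx (hback ▸ hx)

end RigidStabilizer

/-- If the orbit `O` of `x` under `R_G(V)` were finite, then `W = V \ (O \ {x})` would be an
open neighbourhood of `x`; an element of `R_G(W) ≤ R_G(V)` moving `x` would send it to a point
of `O ∩ W` other than `x`, which is impossible. -/
theorem rigidStabilizer_orbit_infinite_general
    {G X : Type*} [Group G] [TopologicalSpace X] [T2Space X] [MulAction Gᵐᵒᵖ X]
    (hnofix : ∀ V : Set X, IsOpen V → ∀ x ∈ V, ∃ g ∈ rigidStabilizer G V, op g • x ≠ x) :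
    ∀ V : Set X, IsOpen V → ∀ x ∈ V,
      {y : X | ∃ g ∈ rigidStabilizer G V, y = op g • x}.Infinite := by
  intro V hV x hx hfin
  set O := {y : X | ∃ g ∈ rigidStabilizer G V, y = op g • x}
  have hW : IsOpen (V \ (O \ {x})) := hV.sdiff (hfin.sdiff.isClosed)
  have hxW : x ∈ V \ (O \ {x}) := ⟨hx, fun h => h.2 rfl⟩
  obtain ⟨g, hgW, hgx⟩ := hnofix _ hW x hxW
  have hgO : op g • x ∈ O := ⟨g, rigidStabilizer_mono Set.sdiff_subset hgW, rfl⟩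
  exact (smul_mem_of_mem_rigidStabilizer hgW hxW).2 ⟨hgO, hgx⟩

/-- If a group `G` acts on the right by homeomorphisms on a Hausdorff space `X`
(encoded as a left action of `Gᵐᵒᵖ`, so `x·g = op g • x`) and for every nonempty
open `V ⊆ X` the rigid stabilizer `R_G(V)` has no fixed point in `V`, then for every
nonempty open `V` and every `x ∈ V` the orbit `{x·g : g ∈ R_G(V)}` is infinite. -/
theorem rigidStabilizer_orbit_infinite
    {G X : Type*} [Group G] [TopologicalSpace X] [T2Space X] [MulAction Gᵐᵒᵖ X]
    (hcont : ∀ g : G, Continuous fun x : X => op g • x)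
    (hnofix : ∀ V : Set X, IsOpen V → ∀ x ∈ V, ∃ g ∈ rigidStabilizer G V, op g • x ≠ x) :
    ∀ V : Set X, IsOpen V → ∀ x ∈ V,
      {y : X | ∃ g ∈ rigidStabilizer G V, y = op g • x}.Infinite :=
  rigidStabilizer_orbit_infinite_general hnofix
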